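/- For n ≥ 3, in Aut(W_n) the product σ_{12}σ_{13}···σ_{1n}σ_{21}σ_{23}···σ_{2n} equals the inner automorphism given by conjugation by x_1 = s_1 s_2, restricted appropriately; more precisely, its image under the restriction map to Aut(ker ε) ≅ Aut(F_{n-1}) is conjugation by x_1. -/

import Mathlib

/-- The relations of the universal Coxeter group of rank `n`. -/
def univCoxeterRels (n : ℕ) : Set (FreeGroup (Fin n)) :=
  {r | ∃ i : Fin n, r = (FreeGroup.of i) ^ 2}

/-- The universal Coxeter group `Wₙ`, the free product of `n` copies of `ℤ/2`. -/
abbrev UnivCoxeterGroup (n : ℕ) := PresentedGroup (univCoxeterRels n)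

/-- The standard generators `sᵢ` of `Wₙ`. -/
def ucs {n : ℕ} (i : Fin n) : UnivCoxeterGroup n := PresentedGroup.of i


/-!
Write `τₐ = ∏_{j ≠ a} σₐⱼ`. Each factor `σₐⱼ` conjugates `sⱼ` by `sₐ` and fixes every other
generator, in particular `sₐ`; so `τₐ` sends `sₖ ↦ sₐ sₖ sₐ` for `k ≠ a` and fixes `sₐ`. As
`sₐ² = 1`, this is exactly what the inner automorphism `conj sₐ` does, hence `τₐ = conj sₐ` and
`τ₁ τ₂ = conj s₁ ∘ conj s₂ = conj (s₁ s₂)`.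
-/

namespace UnivCoxeterGroup

variable {n : ℕ}

theorem ucs_mul_self (i : Fin n) : ucs i * ucs i = 1 := by
  have hrel : (FreeGroup.of i ^ 2 : FreeGroup (Fin n)) ∈
      Subgroup.normalClosure (univCoxeterRels n) :=
    Subgroup.subset_normalClosure ⟨i, rfl⟩
  rw [← sq]
  exact (QuotientGroup.eq_one_iff _).mpr hrel

theorem ucs_inv (i : Fin n) : (ucs i)⁻¹ = ucs i :=
  inv_eq_of_mul_eq_one_right (ucs_mul_self i)

theorem mulAut_ext_ucs {f g : MulAut (UnivCoxeterGroup n)} (h : ∀ i, f (ucs i) = g (ucs i)) :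
    f = g :=
  MulEquiv.toMonoidHom_injective (PresentedGroup.ext h)

/-- `f` is the partial conjugation `σᵢⱼ`. -/
def IsPartialConjugation (i j : Fin n) (f : MulAut (UnivCoxeterGroup n)) : Prop :=
  f (ucs j) = ucs i * ucs j * ucs i ∧ ∀ k : Fin n, k ≠ j → f (ucs k) = ucs k

theorem list_prod_partialConjugations_apply_ucs {a : Fin n}
    {σ : Fin n → MulAut (UnivCoxeterGroup n)} {L : List (Fin n)}
    (hσ : ∀ j ∈ L, IsPartialConjugation a j (σ j)) (ha : a ∉ L) (hL : L.Nodup) (k : Fin n) :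
    (L.map σ).prod (ucs k) = if k ∈ L then ucs a * ucs k * ucs a else ucs k := by
  induction L with
  | nil => simp
  | cons j L ih =>
    obtain ⟨hjL, hLnd⟩ := List.nodup_cons.mp hL
    obtain ⟨hσj_conj, hσj_fix⟩ := hσ j List.mem_cons_self
    have haj : a ≠ j := fun h => ha (h ▸ List.mem_cons_self)
    rw [List.map_cons, List.prod_cons, MulAut.mul_apply,
      ih (fun i hi => hσ i (.tail j hi)) (fun h => ha (.tail j h)) hLnd]
    by_cases hkj : k = j
    · subst hkj
      simp [hjL, hσj_conj]
    · by_cases hkL : k ∈ L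
      · simp [hkL, hσj_fix a haj, hσj_fix k hkj]
      · simp [hkL, hkj, hσj_fix k hkj]

theorem prod_partialConjugations_eq_conj_ucs (a : Fin n)
    (σ : Fin n → MulAut (UnivCoxeterGroup n))
    (hσ : ∀ j, j ≠ a → IsPartialConjugation a j (σ j)) :
    (((List.finRange n).filter (fun j => j ≠ a)).map σ).prod = MulAut.conj (ucs a) := by
  refine mulAut_ext_ucs fun k => ?_
  rw [list_prod_partialConjugations_apply_ucs (fun j hj => hσ j (by simpa using hj)) (by simp)
    ((List.nodup_finRange n).filter _), MulAut.conj_apply, ucs_inv]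
  by_cases hka : k = a
  · subst hka
    simp [ucs_mul_self]
  · simp [hka]

end UnivCoxeterGroup

/-- For `n ≥ 3`, the product `σ₁₂σ₁₃⋯σ₁ₙ σ₂₁σ₂₃⋯σ₂ₙ` of partial conjugations
acts as conjugation by `x₁ = s₁s₂`; in particular its restriction to the
characteristic free subgroup `ker ε ≅ F_{n-1}` is the inner automorphism `g_{x₁}`. -/
theorem prod_partialConjugations_eq_conj (n : ℕ) (hn : 3 ≤ n)
    (σ : Fin n → Fin n → MulAut (UnivCoxeterGroup n))
    (hσ : ∀ i j : Fin n, i ≠ j →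
      σ i j (ucs j) = ucs i * ucs j * ucs i ∧
      ∀ k : Fin n, k ≠ j → σ i j (ucs k) = ucs k) :
    ∀ x : UnivCoxeterGroup n,
      ((((List.finRange n).filter (fun j => j ≠ ⟨0, by omega⟩)).map
          (fun j => σ ⟨0, by omega⟩ j)).prod *
       (((List.finRange n).filter (fun j => j ≠ ⟨1, by omega⟩)).map
          (fun j => σ ⟨1, by omega⟩ j)).prod) x =
        (ucs ⟨0, by omega⟩ * ucs ⟨1, by omega⟩) * x *
          (ucs ⟨0, by omega⟩ * ucs ⟨1, by omega⟩)⁻¹ := by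
  intro x
  have hτ (a : Fin n) :=
    UnivCoxeterGroup.prod_partialConjugations_eq_conj_ucs a (σ a) fun j hj => hσ a j hj.symm
  rw [hτ, hτ, ← map_mul, MulAut.conj_apply]
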